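/- Let 𝓕 be a finite set of finite simple graphs, G a finite simple graph, S ⊆ V(G) nonempty, T ⊆ V(G) \ S, and k a natural number. Suppose that (a) there is no tight enrichment U ⊆ V(G) \ (S ∪ T) of S with respect to 𝓕 such that every connected component of G[U] is adjacent to a vertex of S; let 𝒰 be the collection of all connected sets U ⊆ V(G) \ (S ∪ T) that are tight enrichments of S with respect to 𝓕, and let V(𝒰) be their union. Suppose further that (b) P is a minimum-size left-restricted (S, T ∪ V(𝒰))-separator whose size equals λ^L_G(S,T), and set S' = R_G(S,P). Then for every vertex set C with S ⊆ C ⊆ V(G) \ T such that G[C] is connected, 𝓕-free, and |N_G(C)| ≤ k, the set C ∪ S' also satisfies S ⊆ C ∪ S' ⊆ V(G) \ T, G[C ∪ S'] is connected and 𝓕-free, and |N_G(C ∪ S')| ≤ |N_G(C)| ≤ k. Consequently, every set that is seclusion-maximal with respect to the property "connected, 𝓕-free, k-secluded, and S ⊆ C ⊆ V(G) \ T" contains S'. -/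

import Mathlib

/-!
Write `S' = R(S, P)`. Since `P` separates `S` from `T ∪ V(𝒰)`, the set `S'` avoids `T` and every
connected tight enrichment, and each of its vertices is joined to `S` inside `S'`, so `C ∪ S'`
stays connected. By submodularity, `|N(C ∪ S')| + |N(C ∩ S')| ≤ |N(C)| + |N(S')|`, where
`N(S') ⊆ P` and `N(C ∩ S')` is a left-restricted `(S,T)`-separator, hence no smaller than `P`.

For `𝓕`-freeness, take a copy `ψ` of `F ∈ 𝓕` in `C ∪ S'` and let `A` be the union of the
components of `F` that `ψ` maps into `C \ S` with no neighbour in `S`. If the rest of `F` embedded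
into `G[S]`, gluing would put `F` inside `C`. Otherwise a minimal unembeddable union `D` of
components outside `A` gives the tight enrichment `ψ(D) \ S`; by (a) one of its components `U₀`
has no neighbour in `S`, and gluing `ψ` on `ψ⁻¹(U₀)` with an embedding of the rest of `D` into
`G[S]` (minimality) shows `U₀` is a connected tight enrichment. Then `U₀` misses `S'`, so the
components of `F` mapped onto `U₀` lie in `A`, a contradiction.
-/

open SimpleGraph

/-- The open neighborhood of a vertex set `C` in a graph `G`. -/
def openNbhd {V : Type} (G : SimpleGraph V) (C : Set V) : Set V :=
  {v | v ∉ C ∧ ∃ u ∈ C, G.Adj u v}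

/-- `C` is seclusion-maximal for property `Pr`. -/
def SeclusionMaximal {V : Type} (G : SimpleGraph V) (Pr : Set V → Prop) (C : Set V) : Prop :=
  Pr C ∧ ∀ C' : Set V, C ⊂ C' → Pr C' → (openNbhd G C).ncard < (openNbhd G C').ncard

/-- `u` can reach `v` in `G` by a walk whose support stays inside `A`. -/
def ReachIn {V : Type} (G : SimpleGraph V) (A : Set V) (u v : V) : Prop :=
  ∃ w : G.Walk u v, ∀ x ∈ w.support, x ∈ A

/-- The set of vertices reachable in `G − P` from a vertex of `S \ P`. -/
def reachSet {V : Type} (G : SimpleGraph V) (S P : Set V) : Set V :=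
  {v | ∃ s ∈ S \ P, ReachIn G Pᶜ s v}

/-- `P` is an unrestricted `(S,T)`-separator: no vertex of `S \ P` reaches a
vertex of `T \ P` in `G − P`. -/
def IsSep {V : Type} (G : SimpleGraph V) (S T P : Set V) : Prop :=
  ∀ s ∈ S \ P, ∀ t ∈ T \ P, ¬ ReachIn G Pᶜ s t

/-- A left-restricted `(S,T)`-separator additionally avoids `S`. -/
def IsLeftSep {V : Type} (G : SimpleGraph V) (S T P : Set V) : Prop :=
  IsSep G S T P ∧ P ∩ S = ∅

/-- A minimum-size left-restricted `(S,T)`-separator. -/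
def IsMinLeftSep {V : Type} (G : SimpleGraph V) (S T P : Set V) : Prop :=
  IsLeftSep G S T P ∧ ∀ Q : Set V, IsLeftSep G S T Q → P.ncard ≤ Q.ncard

/-- `λ^L_G(S,T)`: the minimum size of a left-restricted `(S,T)`-separator,
`⊤` (i.e. `+∞`) if none exists. -/
noncomputable def lamL {V : Type} (G : SimpleGraph V) (S T : Set V) : ℕ∞ :=
  ⨅ (P : Set V) (_ : IsLeftSep G S T P), (P.ncard : ℕ∞)

/-- `D` is a union of connected components of `H`. -/
def ComponentClosed {W : Type} (H : SimpleGraph W) (D : Set W) : Prop :=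
  ∀ x ∈ D, ∀ y : W, H.Reachable x y → y ∈ D

/-- `U` is a tight enrichment of `S` with respect to the family `Gf`: there is a
partial forbidden graph (an induced subgraph of some `Gf i` on a union `D` of its
connected components) and an induced-subgraph embedding `φ` of it into `G` with
`U = φ(D) \ S`, such that `G[S]` contains no induced copy of that partial
forbidden graph. -/
def TightEnrichment {V : Type} {ι : Type} {Fv : ι → Type}
    (Gf : ∀ i, SimpleGraph (Fv i)) (G : SimpleGraph V) (S U : Set V) : Prop :=
  ∃ (i : ι) (D : Set (Fv i)) (φ : ((Gf i).induce D) ↪g G),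
    ComponentClosed (Gf i) D ∧
    U = Set.range (fun d : ↥D => φ d) \ S ∧
    IsEmpty (((Gf i).induce D) ↪g (G.induce S))

section Reach

variable {V : Type} {G : SimpleGraph V} {A S T P : Set V} {u v : V}

lemma reachIn_refl (hu : u ∈ A) : ReachIn G A u u :=
  ⟨Walk.nil, by simpa using hu⟩

lemma ReachIn.mem_right (h : ReachIn G A u v) : v ∈ A :=
  h.elim fun p hp => hp v p.end_mem_support

lemma ReachIn.concat {w : V} (h : ReachIn G A u v) (hvw : G.Adj v w) (hw : w ∈ A) :
    ReachIn G A u w := by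
  obtain ⟨p, hp⟩ := h
  refine ⟨p.concat hvw, fun x hx => ?_⟩
  rw [Walk.support_concat, List.mem_append, List.mem_singleton] at hx
  exact hx.elim (hp x) (· ▸ hw)

lemma reachIn_of_mem_support {p : G.Walk u v} (hp : ∀ x ∈ p.support, x ∈ A) {x : V}
    (hx : x ∈ p.support) : ReachIn G A u x := by
  classical
  exact ⟨p.takeUntil x hx, fun y hy => hp y (p.support_takeUntil_subset_support hx hy)⟩

lemma connected_induce_setOf_reachIn (hu : u ∈ A) :
    (G.induce {x | ReachIn G A u x}).Connected :=
  induce_connected_of_patches u (reachIn_refl hu) fun {_} ⟨p, hp⟩ =>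
    ⟨{x | x ∈ p.support}, fun _ hx => reachIn_of_mem_support hp hx, p.start_mem_support,
      p.end_mem_support, p.connected_induce_support.preconnected _ _⟩

lemma subset_reachSet (hPS : P ∩ S = ∅) : S ⊆ reachSet G S P := fun s hs =>
  have hsP : s ∉ P := fun hsP => (Set.eq_empty_iff_forall_notMem.mp hPS) s ⟨hsP, hs⟩
  ⟨s, ⟨hs, hsP⟩, reachIn_refl hsP⟩

lemma openNbhd_reachSet_subset : openNbhd G (reachSet G S P) ⊆ P := by
  rintro v ⟨hv, u, ⟨s, hs, hsu⟩, huv⟩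
  by_contra hvP
  exact hv ⟨s, hs, hsu.concat huv hvP⟩

lemma IsSep.disjoint_reachSet (h : IsSep G S T P) : Disjoint (reachSet G S P) T :=
  Set.disjoint_left.mpr fun _ ⟨s, hs, hsv⟩ hvT => h s hs _ ⟨hvT, hsv.mem_right⟩ hsv

lemma connected_induce_union_reachSet {C : Set V} (hC : (G.induce C).Connected) (hSC : S ⊆ C) :
    (G.induce (C ∪ reachSet G S P)).Connected := by
  obtain ⟨⟨c, hc⟩⟩ := hC.nonempty
  refine induce_connected_of_patches c (Or.inl hc) fun {v} hv => ?_
  rcases hv with hv | ⟨s, hs, hsv⟩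
  · exact ⟨C, Set.subset_union_left, hc, hv, hC.preconnected _ _⟩
  · have hconn := induce_union_connected hC.preconnected
      (connected_induce_setOf_reachIn (G := G) (A := Pᶜ) hs.2).preconnected
      ⟨s, hSC hs.1, reachIn_refl (A := Pᶜ) hs.2⟩
    exact ⟨C ∪ {x | ReachIn G Pᶜ s x},
      Set.union_subset_union_right _ fun x hx => ⟨s, hs, hx⟩, Or.inl hc, Or.inr hsv,
      hconn.preconnected _ _⟩

end Reach

section Neighborhood

variable {V : Type} {G : SimpleGraph V} {S T : Set V}

lemma openNbhd_isLeftSep {B : Set V} (hSB : S ⊆ B) (hBT : Disjoint B T) :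
    IsLeftSep G S T (openNbhd G B) := by
  refine ⟨?_, Set.eq_empty_of_forall_notMem fun x ⟨hx, hxS⟩ => hx.1 (hSB hxS)⟩
  rintro s ⟨hs, -⟩ t ⟨ht, -⟩ ⟨p, hp⟩
  obtain ⟨d, hd, hdB, hdB'⟩ :=
    p.exists_boundary_dart B (hSB hs) fun htB => Set.disjoint_left.mp hBT htB ht
  exact hp d.snd (p.dart_snd_mem_support_of_mem_darts hd) ⟨hdB', d.fst, hdB, d.adj⟩

lemma ncard_le_of_isLeftSep {P Q : Set V} (hP : (P.ncard : ℕ∞) = lamL G S T)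
    (hQ : IsLeftSep G S T Q) : P.ncard ≤ Q.ncard := by
  have : lamL G S T ≤ Q.ncard := iInf₂_le Q hQ
  exact_mod_cast hP ▸ this

lemma openNbhd_union_add_inter_le [Finite V] (A B : Set V) :
    (openNbhd G (A ∪ B)).ncard + (openNbhd G (A ∩ B)).ncard ≤
      (openNbhd G A).ncard + (openNbhd G B).ncard := by
  have hunion : openNbhd G (A ∪ B) ∪ openNbhd G (A ∩ B) ⊆ openNbhd G A ∪ openNbhd G B := by
    rintro v (⟨hv, u, hu | hu, huv⟩ | ⟨hv, u, ⟨huA, huB⟩, huv⟩)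
    · exact Or.inl ⟨fun h => hv (Or.inl h), u, hu, huv⟩
    · exact Or.inr ⟨fun h => hv (Or.inr h), u, hu, huv⟩
    · by_cases hvA : v ∈ A
      · exact Or.inr ⟨fun hvB => hv ⟨hvA, hvB⟩, u, huB, huv⟩
      · exact Or.inl ⟨hvA, u, huA, huv⟩
  have hinter : openNbhd G (A ∪ B) ∩ openNbhd G (A ∩ B) ⊆ openNbhd G A ∩ openNbhd G B := by
    rintro v ⟨⟨hv, -⟩, -, u, ⟨huA, huB⟩, huv⟩
    exact ⟨⟨fun h => hv (Or.inl h), u, huA, huv⟩, ⟨fun h => hv (Or.inr h), u, huB, huv⟩⟩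
  rw [← Set.ncard_union_add_ncard_inter, ← Set.ncard_union_add_ncard_inter (openNbhd G A)]
  exact add_le_add (Set.ncard_le_ncard hunion) (Set.ncard_le_ncard hinter)

lemma ncard_openNbhd_union_reachSet_le [Finite V] {C P : Set V} (hSC : S ⊆ C)
    (hCT : Disjoint C T) (hPS : P ∩ S = ∅) (hP : (P.ncard : ℕ∞) = lamL G S T) :
    (openNbhd G (C ∪ reachSet G S P)).ncard ≤ (openNbhd G C).ncard := by
  have hsep : IsLeftSep G S T (openNbhd G (C ∩ reachSet G S P)) :=
    openNbhd_isLeftSep (Set.subset_inter hSC (subset_reachSet hPS))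
      (hCT.mono_left Set.inter_subset_left)
  have hS' : (openNbhd G (reachSet G S P)).ncard ≤ P.ncard :=
    Set.ncard_le_ncard openNbhd_reachSet_subset
  have := ncard_le_of_isLeftSep hP hsep
  have := openNbhd_union_add_inter_le (G := G) C (reachSet G S P)
  omega

lemma SeclusionMaximal.subset_of_union {Pr : Set V → Prop} {C X : Set V}
    (hC : SeclusionMaximal G Pr C) (hX : Pr (C ∪ X))
    (hN : (openNbhd G (C ∪ X)).ncard ≤ (openNbhd G C).ncard) : X ⊆ C := by
  by_contra hXC
  have hlt := hC.2 _ (Set.ssubset_union_left_iff.mpr hXC) hX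
  omega

end Neighborhood

section Embedding

variable {V W : Type} {F : SimpleGraph W} {G : SimpleGraph V}

lemma ComponentClosed.diff {D E : Set W} (hD : ComponentClosed F D) (hE : ComponentClosed F E) :
    ComponentClosed F (D \ E) :=
  fun x hx y hxy => ⟨hD x hx.1 y hxy, fun hy => hx.2 (hE y hy x hxy.symm)⟩

lemma componentClosed_of_adj {D : Set W} (h : ∀ x ∈ D, ∀ y, F.Adj x y → y ∈ D) :
    ComponentClosed F D := by
  rintro x hx y ⟨p⟩
  induction p with
  | nil => exact hx
  | cons hxy _ ih => exact ih (h _ hx _ hxy)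

lemma exists_induce_embedding_piecewise (ψ : F ↪g G) {S : Set V} {A D : Set W} (hAD : A ⊆ D)
    (hA : ComponentClosed F A) (hψA : ∀ x ∈ A, ψ x ∉ S ∧ ∀ s ∈ S, ¬ G.Adj (ψ x) s)
    (θ : F.induce (D \ A) ↪g G.induce S) :
    ∃ h : F.induce D ↪g G, ψ '' A ⊆ Set.range h ∧ Set.range h ⊆ ψ '' A ∪ S := by
  classical
  let f : D → V := fun d => if hd : d.1 ∈ A then ψ d else θ ⟨d, d.2, hd⟩
  have hfS : ∀ d : D, d.1 ∉ A → f d ∈ S := fun d hd => by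
    simp only [f, dif_neg hd]
    exact (θ _).2
  have cross : ∀ a b : D, a.1 ∈ A → b.1 ∉ A → f a ≠ f b ∧ ¬ G.Adj (f a) (f b) ∧ ¬ F.Adj a b :=
    fun a b ha hb => by
      have hfb := hfS b hb
      simp only [f, dif_pos ha]
      exact ⟨fun h => (hψA a ha).1 (h ▸ hfb), (hψA a ha).2 _ hfb,
        fun hab => hb (hA a ha b hab.reachable)⟩
  refine ⟨⟨⟨f, fun a b hab => ?_⟩, fun {a b} => ?_⟩, ?_, ?_⟩
  · by_cases ha : a.1 ∈ A <;> by_cases hb : b.1 ∈ A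
    · exact Subtype.ext (ψ.injective (by simpa [f, ha, hb] using hab))
    · exact absurd hab (cross a b ha hb).1
    · exact absurd hab.symm (cross b a hb ha).1
    · have := θ.injective (Subtype.ext (by simpa [f, ha, hb] using hab))
      exact Subtype.ext (congrArg (fun x : ↥(D \ A) => x.1) this)
  · change G.Adj (f a) (f b) ↔ F.Adj a b
    by_cases ha : a.1 ∈ A <;> by_cases hb : b.1 ∈ A
    · simp [f, ha, hb]
    · exact iff_of_false (cross a b ha hb).2.1 (cross a b ha hb).2.2
    · exact iff_of_false (fun h => (cross b a hb ha).2.1 h.symm)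
        (fun h => (cross b a hb ha).2.2 h.symm)
    · simpa [f, ha, hb] using θ.map_adj_iff (v := ⟨a, a.2, ha⟩) (w := ⟨b, b.2, hb⟩)
  · rintro _ ⟨x, hx, rfl⟩
    exact ⟨⟨x, hAD hx⟩, dif_pos hx⟩
  · rintro _ ⟨d, rfl⟩
    by_cases hd : d.1 ∈ A
    · exact Or.inl ⟨d, hd, (dif_pos hd : f d = ψ d).symm⟩
    · exact Or.inr (hfS d hd)

lemma nonempty_embedding_induce_of_range_subset {X : Type} {H : SimpleGraph X} {C : Set V}
    (h : H ↪g G) (hC : Set.range h ⊆ C) : Nonempty (H ↪g G.induce C) :=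
  ⟨(induceHomOfLE G hC).comp h.isoInduceRange.toEmbedding⟩

lemma nonempty_embedding_induce_of_piecewise (ψ : F ↪g G) {S C : Set V} {A : Set W}
    (hSC : S ⊆ C) (hA : ComponentClosed F A)
    (hψA : ∀ x ∈ A, ψ x ∈ C ∧ ψ x ∉ S ∧ ∀ s ∈ S, ¬ G.Adj (ψ x) s)
    (θ : F.induce (Set.univ \ A) ↪g G.induce S) : Nonempty (F ↪g G.induce C) := by
  obtain ⟨h, -, hrange⟩ := exists_induce_embedding_piecewise ψ (Set.subset_univ A) hA
    (fun x hx => (hψA x hx).2) θ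
  obtain ⟨e⟩ := nonempty_embedding_induce_of_range_subset h <| hrange.trans <|
    Set.union_subset (Set.image_subset_iff.mpr fun x hx => (hψA x hx).1) hSC
  exact ⟨e.comp (induceUnivIso F).symm.toEmbedding⟩

lemma exists_minimal_componentClosed_isEmpty [Finite W] {X : Type} {H : SimpleGraph X}
    {D₁ : Set W} (hD₁ : ComponentClosed F D₁) (hD₁H : IsEmpty (F.induce D₁ ↪g H)) :
    ∃ D ⊆ D₁, ComponentClosed F D ∧ IsEmpty (F.induce D ↪g H) ∧
      ∀ E ⊂ D, ComponentClosed F E → Nonempty (F.induce E ↪g H) := by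
  obtain ⟨D, hD⟩ := (Set.toFinite {E | E ⊆ D₁ ∧ ComponentClosed F E ∧
    IsEmpty (F.induce E ↪g H)}).exists_minimal ⟨D₁, subset_rfl, hD₁, hD₁H⟩
  obtain ⟨hDD₁, hDcc, hDH⟩ := hD.prop
  exact ⟨D, hDD₁, hDcc, hDH, fun E hE hEcc => not_isEmpty_iff.mp fun hEH =>
    hE.2 (hD.2 ⟨hE.1.trans hDD₁, hEcc, hEH⟩ hE.1)⟩

end Embedding

section Enrichment

variable {V ι : Type} {Fv : ι → Type} {Gf : ∀ i, SimpleGraph (Fv i)} {G : SimpleGraph V}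
  {S T : Set V} {i : ι}

lemma tightEnrichment_image (ψ : Gf i ↪g G) {D₀ D : Set (Fv i)} (hD₀D : D₀ ⊆ D)
    (hD₀ : D₀.Nonempty) (hD₀cc : ComponentClosed (Gf i) D₀) (hDcc : ComponentClosed (Gf i) D)
    (hDS : IsEmpty ((Gf i).induce D ↪g G.induce S))
    (hmin : ∀ E ⊂ D, ComponentClosed (Gf i) E → Nonempty ((Gf i).induce E ↪g G.induce S))
    (hψD₀ : ∀ x ∈ D₀, ψ x ∉ S ∧ ∀ s ∈ S, ¬ G.Adj (ψ x) s) :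
    TightEnrichment Gf G S (ψ '' D₀) := by
  obtain ⟨θ⟩ := hmin _ (LE.le.sdiff_ssubset_of_nonempty hD₀D hD₀) (hDcc.diff hD₀cc)
  obtain ⟨h, himage, hrange⟩ := exists_induce_embedding_piecewise ψ hD₀D hD₀cc hψD₀ θ
  refine ⟨i, D, h, hDcc, Set.Subset.antisymm ?_ ?_, hDS⟩
  · rintro _ ⟨x, hx, rfl⟩
    exact ⟨himage ⟨x, hx, rfl⟩, (hψD₀ x hx).1⟩
  · rintro v ⟨hv, hvS⟩
    exact (hrange hv).resolve_right hvS

lemma isEmpty_embedding_induce_union [Finite (Fv i)] {C X : Set V} (hSC : S ⊆ C)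
    (hCX : Disjoint (C ∪ X) T)
    (hX : ∀ U, U ⊆ (S ∪ T)ᶜ → TightEnrichment Gf G S U → (G.induce U).Connected → Disjoint X U)
    (ha : ∀ U, U ⊆ (S ∪ T)ᶜ → TightEnrichment Gf G S U →
      ∃ u ∈ U, ∀ u', ReachIn G U u u' → ∀ s ∈ S, ¬ G.Adj u' s)
    (hC : IsEmpty (Gf i ↪g G.induce C)) : IsEmpty (Gf i ↪g G.induce (C ∪ X)) := by
  refine ⟨fun ψC => ?_⟩
  set ψ : Gf i ↪g G := (Embedding.induce (C ∪ X)).comp ψC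
  have hψ : ∀ x, ψ x ∈ C ∪ X := fun x => (ψC x).2
  set A := {x | ∀ y, (Gf i).Reachable x y → ψ y ∈ C ∧ ψ y ∉ S ∧ ∀ s ∈ S, ¬ G.Adj (ψ y) s}
  have hAcc : ComponentClosed (Gf i) A := fun x hx y hxy z hyz => hx z (hxy.trans hyz)
  have hψA : ∀ x ∈ A, ψ x ∈ C ∧ ψ x ∉ S ∧ ∀ s ∈ S, ¬ G.Adj (ψ x) s := fun x hx => hx x .rfl
  have hcompl : IsEmpty ((Gf i).induce (Set.univ \ A) ↪g G.induce S) :=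
    ⟨fun θ => hC.false (nonempty_embedding_induce_of_piecewise ψ hSC hAcc hψA θ).some⟩
  obtain ⟨D, hDA, hDcc, hDS, hmin⟩ := exists_minimal_componentClosed_isEmpty
    (ComponentClosed.diff (fun _ _ _ _ => trivial) hAcc) hcompl
  have hU : TightEnrichment Gf G S (ψ '' D \ S) :=
    ⟨i, D, ψ.comp (Embedding.induce D), hDcc, by rw [Set.image_eq_range]; rfl, hDS⟩
  have hUST : ψ '' D \ S ⊆ (S ∪ T)ᶜ := by
    rintro _ ⟨⟨x, -, rfl⟩, hxS⟩ (hS | hT)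
    exacts [hxS hS, Set.disjoint_left.mp hCX (hψ x) hT]
  obtain ⟨u, hu, hufar⟩ := ha _ hUST hU
  set U₀ := {v | ReachIn G (ψ '' D \ S) u v}
  set D₀ := {x | x ∈ D ∧ ψ x ∈ U₀}
  have hD₀ : ψ '' D₀ = U₀ := by
    refine Set.Subset.antisymm (Set.image_subset_iff.mpr fun x hx => hx.2) fun v hv => ?_
    obtain ⟨⟨x, hxD, rfl⟩, -⟩ := hv.mem_right
    exact ⟨x, ⟨hxD, hv⟩, rfl⟩
  have hψD₀ : ∀ x ∈ D₀, ψ x ∉ S ∧ ∀ s ∈ S, ¬ G.Adj (ψ x) s :=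
    fun x hx => ⟨hx.2.mem_right.2, hufar _ hx.2⟩
  have hD₀cc : ComponentClosed (Gf i) D₀ := componentClosed_of_adj fun x hx y hxy => by
    have hyD : y ∈ D := hDcc x hx.1 y hxy.reachable
    have hadj : G.Adj (ψ x) (ψ y) := ψ.map_adj_iff.mpr hxy
    exact ⟨hyD, hx.2.concat hadj ⟨⟨y, hyD, rfl⟩, fun hyS => (hψD₀ x hx).2 _ hyS hadj⟩⟩
  have hD₀ne : D₀.Nonempty := by
    obtain ⟨⟨x, hxD, rfl⟩, -⟩ := id hu
    exact ⟨x, hxD, reachIn_refl hu⟩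
  have hTE : TightEnrichment Gf G S U₀ :=
    hD₀ ▸ tightEnrichment_image ψ (fun x hx => hx.1) hD₀ne hD₀cc hDcc hDS hmin hψD₀
  have hXU₀ : Disjoint X U₀ :=
    hX U₀ (fun v hv => hUST hv.mem_right) hTE (connected_induce_setOf_reachIn hu)
  have hD₀A : D₀ ⊆ A := fun x hx y hxy => by
    have hy : y ∈ D₀ := hD₀cc x hx y hxy
    exact ⟨(hψ y).resolve_right fun hyX => Set.disjoint_left.mp hXU₀ hyX hy.2, hψD₀ y hy⟩
  obtain ⟨x, hx⟩ := hD₀ne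
  exact (hDA hx.1).2 (hD₀A hx)

end Enrichment

theorem stmt10_general {V : Type} [Fintype V] {ι : Type} {Fv : ι → Type}
    [∀ i, Fintype (Fv i)] (Gf : ∀ i, SimpleGraph (Fv i))
    (G : SimpleGraph V) (S T : Set V) (k : ℕ)
    -- (a): no tight enrichment all of whose components are adjacent to `S`
    (ha : ¬ ∃ U : Set V, U ⊆ (S ∪ T)ᶜ ∧ TightEnrichment Gf G S U ∧
        ∀ u ∈ U, ∃ u' : V, ReachIn G U u u' ∧ ∃ s ∈ S, G.Adj u' s)
    (P : Set V)
    -- (b): `P` is a minimum left-restricted `(S, T ∪ V(𝒰))`-separator of size `λ^L(S,T)`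
    (hb : IsMinLeftSep G S
      (T ∪ ⋃₀ {U : Set V | U ⊆ (S ∪ T)ᶜ ∧ TightEnrichment Gf G S U ∧
        (G.induce U).Connected}) P)
    (hsize : (P.ncard : ℕ∞) = lamL G S T) :
    (∀ C : Set V, S ⊆ C → C ⊆ Tᶜ → (G.induce C).Connected →
      (∀ i, IsEmpty ((Gf i) ↪g (G.induce C))) → (openNbhd G C).ncard ≤ k →
        (S ⊆ C ∪ reachSet G S P ∧ C ∪ reachSet G S P ⊆ Tᶜ ∧
         (G.induce (C ∪ reachSet G S P)).Connected ∧
         (∀ i, IsEmpty ((Gf i) ↪g (G.induce (C ∪ reachSet G S P)))) ∧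
         (openNbhd G (C ∪ reachSet G S P)).ncard ≤ (openNbhd G C).ncard ∧
         (openNbhd G C).ncard ≤ k)) ∧
    (∀ C : Set V, SeclusionMaximal G (fun D =>
        (G.induce D).Connected ∧
        (∀ i, IsEmpty ((Gf i) ↪g (G.induce D))) ∧
        (openNbhd G D).ncard ≤ k ∧
        S ⊆ D ∧ D ⊆ Tᶜ) C → reachSet G S P ⊆ C) := by
  obtain ⟨⟨hsep, hPS⟩, -⟩ := hb
  have hS'T := hsep.disjoint_reachSet
  have hS'U : ∀ U, U ⊆ (S ∪ T)ᶜ → TightEnrichment Gf G S U → (G.induce U).Connected →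
      Disjoint (reachSet G S P) U := fun U hU hTE hconn =>
    hS'T.mono_right fun x hx => Or.inr ⟨U, ⟨hU, hTE, hconn⟩, hx⟩
  have hfar : ∀ U, U ⊆ (S ∪ T)ᶜ → TightEnrichment Gf G S U →
      ∃ u ∈ U, ∀ u', ReachIn G U u u' → ∀ s ∈ S, ¬ G.Adj u' s := by
    push Not at ha
    exact ha
  refine (fun grow => ⟨grow, fun C hC => ?_⟩) fun C hSC hCT hC hCfree hCk => ?_
  · have hCS'T : Disjoint (C ∪ reachSet G S P) T := Set.disjoint_union_left.mpr
      ⟨Set.subset_compl_iff_disjoint_right.mp hCT, hS'T.mono_right Set.subset_union_left⟩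
    exact ⟨hSC.trans Set.subset_union_left, hCS'T.subset_compl_right,
      connected_induce_union_reachSet hC hSC,
      fun i => isEmpty_embedding_induce_union hSC hCS'T hS'U hfar (hCfree i),
      ncard_openNbhd_union_reachSet_le hSC (hCS'T.mono_left Set.subset_union_left) hPS hsize, hCk⟩
  · obtain ⟨hconn, hfree, hk, hSC, hCT⟩ := hC.1
    obtain ⟨hSC', hCT', hconn', hfree', hN, -⟩ := grow C hSC hCT hconn hfree hk
    exact hC.subset_of_union ⟨hconn', hfree', hN.trans hk, hSC', hCT'⟩ hN

theorem stmt10 {V : Type} [Fintype V] {ι : Type} [Fintype ι] {Fv : ι → Type}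
    [∀ i, Fintype (Fv i)] (Gf : ∀ i, SimpleGraph (Fv i))
    (G : SimpleGraph V) (S T : Set V) (k : ℕ)
    (hS : S.Nonempty) (hT : T ⊆ Sᶜ)
    -- (a): no tight enrichment all of whose components are adjacent to `S`
    (ha : ¬ ∃ U : Set V, U ⊆ (S ∪ T)ᶜ ∧ TightEnrichment Gf G S U ∧
        ∀ u ∈ U, ∃ u' : V, ReachIn G U u u' ∧ ∃ s ∈ S, G.Adj u' s)
    (P : Set V)
    -- (b): `P` is a minimum left-restricted `(S, T ∪ V(𝒰))`-separator of size `λ^L(S,T)`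
    (hb : IsMinLeftSep G S
      (T ∪ ⋃₀ {U : Set V | U ⊆ (S ∪ T)ᶜ ∧ TightEnrichment Gf G S U ∧
        (G.induce U).Connected}) P)
    (hsize : (P.ncard : ℕ∞) = lamL G S T) :
    (∀ C : Set V, S ⊆ C → C ⊆ Tᶜ → (G.induce C).Connected →
      (∀ i, IsEmpty ((Gf i) ↪g (G.induce C))) → (openNbhd G C).ncard ≤ k →
        (S ⊆ C ∪ reachSet G S P ∧ C ∪ reachSet G S P ⊆ Tᶜ ∧
         (G.induce (C ∪ reachSet G S P)).Connected ∧
         (∀ i, IsEmpty ((Gf i) ↪g (G.induce (C ∪ reachSet G S P)))) ∧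
         (openNbhd G (C ∪ reachSet G S P)).ncard ≤ (openNbhd G C).ncard ∧
         (openNbhd G C).ncard ≤ k)) ∧
    (∀ C : Set V, SeclusionMaximal G (fun D =>
        (G.induce D).Connected ∧
        (∀ i, IsEmpty ((Gf i) ↪g (G.induce D))) ∧
        (openNbhd G D).ncard ≤ k ∧
        S ⊆ D ∧ D ⊆ Tᶜ) C → reachSet G S P ⊆ C) :=
  stmt10_general Gf G S T k ha P hb hsize
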